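/- arXiv:1410.1292 — 4 statements merged into one kernel-verified Lean document; each statement's English description precedes it below -/
import Mathlib

section
/- Let g : ℝ → ℝ be strictly concave on [0,∞) with g(0)=0, strictly increasing, and suppose powers p₁ > p₂ > 0 are used for durations d₁, d₂ > 0 with p₁ used first. Then there exists a power p with p₂ < p < p₁ and a time T' < d₁ + d₂ such that transmitting at constant power p for time T' sends the same number of bits g(p₁)d₁ + g(p₂)d₂ while using energy p·T' ≤ p₁ d₁ + p₂ d₂. -/
open Set

/-- If powers `p₁ > p₂ > 0` are used for durations `d₁, d₂ > 0`, there is a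
single power `p ∈ (p₂, p₁)` and a strictly shorter time `T' < d₁ + d₂` with
which the same number of bits can be sent using no more energy. -/
theorem decreasing_powers_suboptimal (g : ℝ → ℝ)
    (hconc : StrictConcaveOn ℝ (Ici (0 : ℝ)) g)
    (hmono : StrictMonoOn g (Ici (0 : ℝ))) (h0 : g 0 = 0)
    (hratio : StrictAntiOn (fun x => g x / x) (Ioi (0 : ℝ)))
    (p₁ p₂ d₁ d₂ : ℝ) (hp₂ : 0 < p₂) (hp : p₂ < p₁)
    (hd₁ : 0 < d₁) (hd₂ : 0 < d₂) :
    ∃ p T' : ℝ, p₂ < p ∧ p < p₁ ∧ 0 < T' ∧ T' < d₁ + d₂ ∧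
      g p * T' = g p₁ * d₁ + g p₂ * d₂ ∧
      p * T' ≤ p₁ * d₁ + p₂ * d₂ := by
  have hD : 0 < d₁ + d₂ := by linarith
  set a : ℝ := d₁ / (d₁ + d₂) with ha_def
  set b : ℝ := d₂ / (d₁ + d₂) with hb_def
  have ha : 0 < a := div_pos hd₁ hD
  have hb : 0 < b := div_pos hd₂ hD
  have hab : a + b = 1 := by rw [ha_def, hb_def]; field_simp
  set p : ℝ := a * p₁ + b * p₂ with hp_def
  have hp₁0 : (0:ℝ) ≤ p₁ := le_of_lt (hp₂.trans hp)
  have hp₂0 : (0:ℝ) ≤ p₂ := hp₂.le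
  have hkey : a • g p₁ + b • g p₂ < g (a • p₁ + b • p₂) :=
    hconc.2 (mem_Ici.2 hp₁0) (mem_Ici.2 hp₂0) (ne_of_gt hp) ha hb hab
  simp only [smul_eq_mul] at hkey
  have hpp₂ : p₂ < p := by nlinarith
  have hpp₁ : p < p₁ := by nlinarith
  have hg₂pos : 0 < g p₂ := by
    have := hmono (mem_Ici.2 le_rfl) (mem_Ici.2 hp₂0) hp₂
    linarith [h0 ▸ this]
  have hg₁pos : 0 < g p₁ := lt_trans hg₂pos (hmono (mem_Ici.2 hp₂0) (mem_Ici.2 hp₁0) hp)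
  have hgppos : 0 < g p := by nlinarith
  set T' : ℝ := (g p₁ * d₁ + g p₂ * d₂) / g p with hT_def
  have hbits : 0 < g p₁ * d₁ + g p₂ * d₂ := by positivity
  have hT'pos : 0 < T' := div_pos hbits hgppos
  have havg : g p₁ * d₁ + g p₂ * d₂ < g p * (d₁ + d₂) := by
    have h1 : a * (d₁ + d₂) = d₁ := by rw [ha_def]; field_simp
    have h2 : b * (d₁ + d₂) = d₂ := by rw [hb_def]; field_simp
    nlinarith
  have hT'lt : T' < d₁ + d₂ := (div_lt_iff₀ hgppos).2 (by linarith [havg])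
  refine ⟨p, T', hpp₂, hpp₁, hT'pos, hT'lt, ?_, ?_⟩
  · rw [hT_def]; field_simp
  · have hpD : p * (d₁ + d₂) = p₁ * d₁ + p₂ * d₂ := by
      have h1 : a * (d₁ + d₂) = d₁ := by rw [ha_def]; field_simp
      have h2 : b * (d₁ + d₂) = d₂ := by rw [hb_def]; field_simp
      nlinarith
    have hppos : 0 < p := lt_trans hp₂ hpp₂
    nlinarith
end

section
/- Let g be concave increasing with g(0)=0 and g(x)/x strictly decreasing, and let ℰ be a non-decreasing step function of cumulative energy arrivals. Suppose constant power p_c is feasible on [T_start, T_start + T̃₀] (i.e., p_c·(t − T_start) ≤ ℰ(t) for all t in this interval), and suppose τ_q ∈ (T_start, T_start + T̃₀) is an epoch with p_c·(τ_q − T_start) = ℰ(τ_q⁻). If a non-decreasing power profile starting at τ_q with first power p_q satisfies the energy constraint and exhausts arrivals at its segment boundaries, and its first segment ends at an epoch τ_{q'} ≤ T_start + T̃₀ with cumulative consumption equal to ℰ(τ_{q'}⁻), then p_q ≥ p_c. -/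
open Set

/-- Theorem 3 (base case): the constant power `p_c`, feasible up to
`Tstart + T̃₀` and exhausting the harvested energy at epoch `τ_q`, cannot
exceed the first power `p_q` of a continuation after `τ_q` whose first
segment ends at an epoch `τ_q'` exhausting energy again. -/
theorem pc_le_first_continuation_power (g : ℝ → ℝ)
    (hconc : ConcaveOn ℝ (Ici (0 : ℝ)) g)
    (hmono : MonotoneOn g (Ici (0 : ℝ))) (h0 : g 0 = 0)
    (hratio : StrictAntiOn (fun x => g x / x) (Ioi (0 : ℝ)))
    (E : ℝ → ℝ) (hE : Monotone E)
    (Tstart T0 p_c τq τq' Eq Eq' p_q : ℝ)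
    (hpc : 0 < p_c) (hT0 : 0 < T0)
    (horder : Tstart < τq) (horder' : τq < τq') (horder'' : τq' ≤ Tstart + T0)
    -- `p_c` is feasible on `[Tstart, Tstart + T0]`:
    (hfeas : ∀ t ∈ Icc Tstart (Tstart + T0), p_c * (t - Tstart) ≤ E t)
    -- left limit values of `E` at `τq` and `τq'`:
    (hEq : ∀ t < τq, E t ≤ Eq)
    (hEq' : ∀ t < τq', E t ≤ Eq')
    -- `p_c` exhausts the harvested energy at epoch `τq`:
    (hexh : p_c * (τq - Tstart) = Eq)
    -- the continuation's first segment, at power `p_q`, runs on `[τq, τq']`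
    -- and exhausts the energy arrived by `τq'`:
    (hexh' : Eq + p_q * (τq' - τq) = Eq') :
    p_c ≤ p_q := by
  have key : p_c * (τq' - Tstart) ≤ Eq' := by
    have h1 : ∀ t ∈ Ico τq τq', p_c * (t - Tstart) ≤ Eq' := by
      intro t ht
      have htT : t ∈ Icc Tstart (Tstart + T0) :=
        ⟨le_of_lt (lt_of_lt_of_le horder ht.1), le_trans (le_of_lt ht.2) horder''⟩
      exact le_trans (hfeas t htT) (hEq' t ht.2)
    refine le_of_forall_pos_le_add ?_
    intro ε hε
    set t := max τq (τq' - ε / p_c) with htdef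
    have ht1 : τq ≤ t := le_max_left _ _
    have ht2 : t < τq' := by
      apply max_lt horder'
      have : 0 < ε / p_c := div_pos hε hpc
      linarith
    have h2 := h1 t ⟨ht1, ht2⟩
    have h3 : τq' - ε / p_c ≤ t := le_max_right _ _
    have h4 : p_c * (τq' - Tstart) ≤ p_c * (t - Tstart) + p_c * (ε / p_c) := by
      nlinarith
    have h5 : p_c * (ε / p_c) = ε := by field_simp
    linarith
  have h6 : p_c * (τq' - τq) ≤ p_q * (τq' - τq) := by nlinarith
  have h7 : 0 < τq' - τq := by linarith
  exact le_of_mul_le_mul_right (by linarith [h6]) h7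
end

section
/- For the online algorithm, at every time t ∈ [T_start, T_online], if the current power is l then (ℰ(t)/l)·g(l) ≤ B₀, with equality only at t = T_start. Formally, by induction on segments k: g(l_k)/l_k ≤ B₀/ℰ(b_k) for all k ≥ 1, with equality iff k = 1. -/
open Set Finset

/-- Lemma 8: along the online algorithm's segments `[b k, b (k+1))` with
powers `l k`, we have `g (l k) / l k ≤ B₀ / E (b k)` for all `1 ≤ k ≤ M`,
with equality exactly at `k = 1` (the start of transmission). -/
theorem online_invariant (g : ℝ → ℝ)
    (hconc : ConcaveOn ℝ (Ici (0 : ℝ)) g)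
    (hmono : MonotoneOn g (Ici (0 : ℝ))) (h0 : g 0 = 0)
    (hratio : StrictAntiOn (fun x => g x / x) (Ioi (0 : ℝ)))
    (M : ℕ) (hM : 1 ≤ M)
    (b l Erem Brem Ej : ℕ → ℝ) (E : ℝ → ℝ) (B₀ : ℝ) (hB₀ : 0 < B₀)
    (hbmono : ∀ k ∈ Finset.Icc 1 M, b k < b (k + 1))
    (hlpos : ∀ k ∈ Finset.Icc 1 M, 0 < l k)
    (hgpos : ∀ k ∈ Finset.Icc 1 M, 0 < g (l k))
    (hEb : ∀ k ∈ Finset.Icc 1 M, 0 < E (b k))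
    (hErem : ∀ k ∈ Finset.Icc 1 M, 0 < Erem k)
    (hBrem : ∀ k ∈ Finset.Icc 1 M, 0 < Brem k)
    -- initialization at `b 1 = T_start`:
    (hinit : Erem 1 = E (b 1)) (hinitB : Brem 1 = B₀)
    -- the online power definition on every segment:
    (hdef : ∀ k ∈ Finset.Icc 1 M, l k / g (l k) = Erem k / Brem k)
    -- arrival energy `Ej k > 0` at each reset epoch `b k`, `k ≥ 2`:
    (hEj : ∀ k ∈ Finset.Icc 2 M, 0 < Ej k)
    (hupdE : ∀ k ∈ Finset.Icc 2 M,
      Erem k = Erem (k - 1) - l (k - 1) * (b k - b (k - 1)) + Ej k)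
    (hupdB : ∀ k ∈ Finset.Icc 2 M,
      Brem k = Brem (k - 1) - g (l (k - 1)) * (b k - b (k - 1)))
    (hupdArr : ∀ k ∈ Finset.Icc 2 M, E (b k) = E (b (k - 1)) + Ej k) :
    (∀ k ∈ Finset.Icc 1 M, g (l k) / l k ≤ B₀ / E (b k)) ∧
      g (l 1) / l 1 = B₀ / E (b 1) ∧
      (∀ k ∈ Finset.Icc 2 M, g (l k) / l k < B₀ / E (b k)) := by
  -- Main invariant, by induction on k.
  have inv : ∀ k, 1 ≤ k → k ≤ M →
      Brem k ≤ B₀ ∧ Brem k * E (b k) ≤ Erem k * B₀ ∧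
        (2 ≤ k → Brem k * E (b k) < Erem k * B₀) := by
    intro k
    induction k with
    | zero => intro h; exact absurd h (by omega)
    | succ n ih =>
      intro _ hle
      by_cases hn : n = 0
      · subst hn
        refine ⟨le_of_eq hinitB, le_of_eq ?_, fun h => absurd h (by omega)⟩
        rw [hinit, hinitB]; ring
      · have hn1 : 1 ≤ n := Nat.one_le_iff_ne_zero.mpr hn
        have hnM : n ≤ M := by omega
        obtain ⟨hB, hI, _⟩ := ih hn1 hnM
        have hmem : n ∈ Finset.Icc 1 M := Finset.mem_Icc.mpr ⟨hn1, hnM⟩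
        have hmem1' : n + 1 ∈ Finset.Icc 1 M := Finset.mem_Icc.mpr ⟨by omega, hle⟩
        have hmem2 : n + 1 ∈ Finset.Icc 2 M := Finset.mem_Icc.mpr ⟨by omega, hle⟩
        have hΔ : 0 < b (n + 1) - b n := by have := hbmono n hmem; linarith
        have hg := hgpos n hmem
        have hl := hlpos n hmem
        have hBn := hBrem n hmem
        have hBn1 := hBrem (n + 1) hmem1'
        have hEn := hErem n hmem
        have hEj' := hEj (n + 1) hmem2
        have hE' := hupdE (n + 1) hmem2
        have hB' := hupdB (n + 1) hmem2
        have hA' := hupdArr (n + 1) hmem2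
        simp only [Nat.add_sub_cancel] at hE' hB' hA'
        have hlg : l n * Brem n = Erem n * g (l n) := by
          have hd := hdef n hmem
          rw [div_eq_div_iff hg.ne' hBn.ne'] at hd
          exact hd
        rw [hB'] at hBn1
        have keyid : Brem n *
            ((Erem n - l n * (b (n + 1) - b n) + Ej (n + 1)) * B₀ -
              (Brem n - g (l n) * (b (n + 1) - b n)) * (E (b n) + Ej (n + 1)))
            = (Brem n - g (l n) * (b (n + 1) - b n)) *
                (Erem n * B₀ - Brem n * E (b n)) +
              Ej (n + 1) * Brem n *
                (B₀ - Brem n + g (l n) * (b (n + 1) - b n)) := by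
          linear_combination (-(b (n + 1) - b n) * B₀) * hlg
        have hX : 0 < (Erem n - l n * (b (n + 1) - b n) + Ej (n + 1)) * B₀ -
            (Brem n - g (l n) * (b (n + 1) - b n)) * (E (b n) + Ej (n + 1)) := by
          have h1 : 0 ≤ (Brem n - g (l n) * (b (n + 1) - b n)) *
              (Erem n * B₀ - Brem n * E (b n)) :=
            mul_nonneg hBn1.le (by linarith)
          have h2 : 0 < Ej (n + 1) * Brem n *
              (B₀ - Brem n + g (l n) * (b (n + 1) - b n)) := by
            apply mul_pos (mul_pos hEj' hBn)
            nlinarith [mul_pos hg hΔ]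
          nlinarith [keyid, hBn]
        have hstrict : Brem (n + 1) * E (b (n + 1)) < Erem (n + 1) * B₀ := by
          rw [hE', hB', hA']; linarith
        refine ⟨?_, hstrict.le, fun _ => hstrict⟩
        rw [hB']
        nlinarith [mul_nonneg hg.le hΔ.le]
  have conv : ∀ k ∈ Finset.Icc 1 M,
      Brem k * E (b k) ≤ Erem k * B₀ → g (l k) * E (b k) ≤ B₀ * l k := by
    intro k hk hI
    have hg := hgpos k hk
    have hBk := hBrem k hk
    have hlg : l k * Brem k = Erem k * g (l k) := by
      have hd := hdef k hk
      rw [div_eq_div_iff hg.ne' hBk.ne'] at hd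
      exact hd
    have h1 : g (l k) * E (b k) * Brem k ≤ B₀ * l k * Brem k := by
      nlinarith [mul_le_mul_of_nonneg_left hI hg.le]
    exact le_of_mul_le_mul_right h1 hBk
  have convlt : ∀ k ∈ Finset.Icc 1 M,
      Brem k * E (b k) < Erem k * B₀ → g (l k) * E (b k) < B₀ * l k := by
    intro k hk hI
    have hg := hgpos k hk
    have hBk := hBrem k hk
    have hlg : l k * Brem k = Erem k * g (l k) := by
      have hd := hdef k hk
      rw [div_eq_div_iff hg.ne' hBk.ne'] at hd
      exact hd
    have h1 : g (l k) * E (b k) * Brem k < B₀ * l k * Brem k := by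
      nlinarith [mul_lt_mul_of_pos_left hI hg]
    exact lt_of_mul_lt_mul_right h1 hBk.le
  have hmem1 : 1 ∈ Finset.Icc 1 M := Finset.mem_Icc.mpr ⟨le_refl 1, hM⟩
  refine ⟨?_, ?_, ?_⟩
  · intro k hk
    obtain ⟨hk1, hk2⟩ := Finset.mem_Icc.mp hk
    obtain ⟨_, hI, _⟩ := inv k hk1 hk2
    rw [div_le_div_iff₀ (hlpos k hk) (hEb k hk)]
    exact conv k hk hI
  · have hd := hdef 1 hmem1
    rw [hinit, hinitB] at hd
    rw [div_eq_div_iff (hgpos 1 hmem1).ne' hB₀.ne'] at hd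
    rw [div_eq_div_iff (hlpos 1 hmem1).ne' (hEb 1 hmem1).ne']
    linear_combination -hd
  · intro k hk
    obtain ⟨hk1, hk2⟩ := Finset.mem_Icc.mp hk
    have hk' : k ∈ Finset.Icc 1 M := Finset.mem_Icc.mpr ⟨by omega, hk2⟩
    obtain ⟨_, _, hIs⟩ := inv k (by omega) hk2
    rw [div_lt_div_iff₀ (hlpos k hk') (hEb k hk')]
    exact convlt k hk' (hIs hk1)
end

section
/- Let g be concave with g(0)=0 and g(x)/x non-increasing. Any policy with powers p_i ≥ 0 on intervals of lengths d_i, using total energy E = Σ_{i: p_i>0} p_i d_i ≤ ℰ and total on-time T = Σ_{i: p_i>0} d_i ≤ Γ, transmits at most Γ·g(ℰ/Γ) bits: Σ_i g(p_i) d_i ≤ Γ·g(ℰ/Γ). -/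
open Set Finset

/-- Key bound in Lemma 9: any policy using total energy at most `Etot` and
total receiver on-time at most `Γ` transmits at most `Γ · g (Etot / Γ)`
bits. -/
theorem bits_upper_bound (g : ℝ → ℝ)
    (hconc : ConcaveOn ℝ (Ici (0 : ℝ)) g)
    (hmono : MonotoneOn g (Ici (0 : ℝ))) (h0 : g 0 = 0)
    (hratio : AntitoneOn (fun x => g x / x) (Ioi (0 : ℝ)))
    (n : ℕ) (p d : ℕ → ℝ)
    (hp : ∀ i ∈ Finset.range n, 0 ≤ p i)
    (hd : ∀ i ∈ Finset.range n, 0 ≤ d i)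
    (Etot Γ : ℝ) (hΓ : 0 < Γ) (hEtot : 0 ≤ Etot)
    (hE : ∑ i ∈ Finset.range n, p i * d i ≤ Etot)
    (hT : ∑ i ∈ (Finset.range n).filter (fun i => 0 < p i), d i ≤ Γ) :
    ∑ i ∈ Finset.range n, g (p i) * d i ≤ Γ * g (Etot / Γ) := by
  set S := (Finset.range n).filter (fun i => 0 < p i) with hS
  have hsub : S ⊆ Finset.range n := Finset.filter_subset _ _
  have hp0 : ∀ i ∈ Finset.range n, i ∉ S → p i = 0 := by
    intro i hi hiS
    have := hp i hi
    by_contra h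
    exact hiS (Finset.mem_filter.2 ⟨hi, lt_of_le_of_ne this (Ne.symm h)⟩)
  have hLHS : ∑ i ∈ Finset.range n, g (p i) * d i = ∑ i ∈ S, g (p i) * d i := by
    refine (Finset.sum_subset hsub ?_).symm
    intro i hi hiS
    rw [hp0 i hi hiS, h0, zero_mul]
  have hEeq : ∑ i ∈ Finset.range n, p i * d i = ∑ i ∈ S, p i * d i := by
    refine (Finset.sum_subset hsub ?_).symm
    intro i hi hiS
    rw [hp0 i hi hiS, zero_mul]
  set T := ∑ i ∈ S, d i with hTdef
  set E := ∑ i ∈ S, p i * d i with hEdef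
  have hE' : E ≤ Etot := hEeq ▸ hE
  have hRHS0 : 0 ≤ g (Etot / Γ) := by
    have := hmono (le_refl (0:ℝ)) (by exact div_nonneg hEtot hΓ.le) (div_nonneg hEtot hΓ.le)
    rw [h0] at this; exact this
  rw [hLHS]
  rcases eq_or_lt_of_le (show (0:ℝ) ≤ T from Finset.sum_nonneg fun i hi => hd i (hsub hi)) with hT0 | hT0
  · -- T = 0 : all d i = 0 on S
    have hall : ∀ i ∈ S, d i = 0 := by
      intro i hi
      have := (Finset.sum_eq_zero_iff_of_nonneg (fun j hj => hd j (hsub hj))).1 hT0.symm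
      exact this i hi
    have : ∑ i ∈ S, g (p i) * d i = 0 :=
      Finset.sum_eq_zero fun i hi => by rw [hall i hi, mul_zero]
    rw [this]
    exact mul_nonneg hΓ.le hRHS0
  · -- T > 0
    have hEpos : 0 < E := by
      obtain ⟨i, hi, hdi⟩ : ∃ i ∈ S, 0 < d i := by
        by_contra h
        push_neg at h
        have : T ≤ 0 := Finset.sum_nonpos h
        linarith
      have hpi : 0 < p i := (Finset.mem_filter.1 hi).2
      exact Finset.sum_pos' (fun j hj => mul_nonneg (hp j (hsub hj)) (hd j (hsub hj)))
        ⟨i, hi, mul_pos hpi hdi⟩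
    -- Jensen
    have hjensen : ∑ i ∈ S, (d i / T) * g (p i) ≤ g (∑ i ∈ S, (d i / T) * p i) := by
      have := hconc.le_map_sum (t := S) (w := fun i => d i / T) (p := p)
        (fun i hi => div_nonneg (hd i (hsub hi)) hT0.le)
        (by rw [← Finset.sum_div, ← hTdef, div_self hT0.ne'])
        (fun i hi => (hp i (hsub hi)))
      simpa using this
    have hsum1 : ∑ i ∈ S, (d i / T) * p i = E / T := by
      rw [hEdef, Finset.sum_div]
      congr 1; ext i; ring
    have hsum2 : ∑ i ∈ S, (d i / T) * g (p i) = (∑ i ∈ S, g (p i) * d i) / T := by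
      rw [Finset.sum_div]
      congr 1; ext i; ring
    rw [hsum1, hsum2] at hjensen
    have step1 : ∑ i ∈ S, g (p i) * d i ≤ T * g (E / T) := by
      have := mul_le_mul_of_nonneg_left hjensen hT0.le
      rwa [mul_div_cancel₀ _ hT0.ne'] at this
    have hTΓ : T ≤ Γ := hT
    have hx : E / Γ ∈ Ioi (0:ℝ) := div_pos hEpos hΓ
    have hy : E / T ∈ Ioi (0:ℝ) := div_pos hEpos hT0
    have hle : E / Γ ≤ E / T := div_le_div_of_nonneg_left hEpos.le hT0 hTΓ
    have hr := hratio hx hy hle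
    simp only at hr
    have step2 : T * g (E / T) ≤ Γ * g (E / Γ) := by
      have h1 : T * g (E / T) = E * (g (E / T) / (E / T)) := by
        field_simp
      have h2 : Γ * g (E / Γ) = E * (g (E / Γ) / (E / Γ)) := by
        field_simp
      rw [h1, h2]
      exact mul_le_mul_of_nonneg_left hr hEpos.le
    have step3 : Γ * g (E / Γ) ≤ Γ * g (Etot / Γ) := by
      apply mul_le_mul_of_nonneg_left _ hΓ.le
      exact hmono (mem_Ici.2 (div_nonneg hEpos.le hΓ.le)) (mem_Ici.2 (div_nonneg hEtot hΓ.le))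
        (by gcongr)
    linarith
end
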